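/- Let μ be a probability measure on ℝ^d with finite second moment, let φ: ℝ^d → ℝ be a convex function that is differentiable μ-almost everywhere, and set T = ∇φ. Assume the pushforward measure T_#μ also has finite second moment. Then T is an optimal transport map from μ to T_#μ for the quadratic cost: for every coupling γ of μ and T_#μ, ∫ ‖x − T(x)‖² dμ(x) ≤ ∫ ‖x − y‖² dγ(x,y). -/

import Mathlib

/-!
Let `ψ` be the convex conjugate of `φ`. The Fenchel–Young inequality `⟪x, y⟫ ≤ φ x + ψ y` holds
for every `y` in the effective domain of `ψ`, with equality at `y = ∇φ x`. Since `ν = T₊μ` is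
carried by such gradients, integrating against any coupling `γ` of `μ` and `ν` gives
`∫ ⟪x, y⟫ dγ ≤ ∫ φ dμ + ∫ ψ dν = ∫ ⟪x, T x⟫ dμ`. In `‖x - y‖² = ‖x‖² - 2⟪x, y⟫ + ‖y‖²` the
squared norms only see the marginals, so no coupling is cheaper than `(id, T)₊μ`.
Continuity of `φ` lets the supremum defining `ψ` run over a countable dense set, which makes `ψ`
and its domain Borel.
-/

open MeasureTheory ProbabilityTheory Matrix
open scoped ENNReal NNReal
open scoped RealInnerProductSpace
open Set

noncomputable section

abbrev Ed (d : ℕ) := EuclideanSpace ℝ (Fin d)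

def IsCoupling {d : ℕ} (γ : Measure (Ed d × Ed d)) (μ ν : Measure (Ed d)) : Prop :=
  γ.map Prod.fst = μ ∧ γ.map Prod.snd = ν

def cost2 {d : ℕ} (γ : Measure (Ed d × Ed d)) : ℝ≥0∞ :=
  ∫⁻ p, ENNReal.ofReal (‖p.1 - p.2‖ ^ 2) ∂γ

def W2sq {d : ℕ} (μ ν : Measure (Ed d)) : ℝ≥0∞ :=
  ⨅ (γ : Measure (Ed d × Ed d)) (_ : IsCoupling γ μ ν), cost2 γ

def W2 {d : ℕ} (μ ν : Measure (Ed d)) : ℝ :=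
  Real.sqrt (W2sq μ ν).toReal

def FiniteSecondMoment {d : ℕ} (μ : Measure (Ed d)) : Prop :=
  ∫⁻ x, ENNReal.ofReal (‖x‖ ^ 2) ∂μ < ⊤

def meanVec {d : ℕ} (μ : Measure (Ed d)) : Ed d := ∫ x, x ∂μ

def covMatrix {d : ℕ} (μ : Measure (Ed d)) : Matrix (Fin d) (Fin d) ℝ :=
  Matrix.of fun i j => ∫ x, (x i - meanVec μ i) * (x j - meanVec μ j) ∂μ

/-- Positive semidefinite square root of a matrix (junk value `0` if not psd). -/
def msqrt {d : ℕ} (S : Matrix (Fin d) (Fin d) ℝ) : Matrix (Fin d) (Fin d) ℝ :=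
  @dite _ S.PosSemidef (Classical.dec _) (fun h => (h.1.eigenvectorUnitary : Matrix (Fin d) (Fin d) ℝ) *
    diagonal ((RCLike.ofReal : ℝ → ℝ) ∘ Real.sqrt ∘ h.1.eigenvalues) *
    (star h.1.eigenvectorUnitary : Matrix (Fin d) (Fin d) ℝ)) (fun _ => 0)

def stdGaussian (d : ℕ) : Measure (Ed d) :=
  (Measure.pi fun _ : Fin d => gaussianReal 0 1).map (EuclideanSpace.equiv (Fin d) ℝ).symm

def gaussianE {d : ℕ} (m : Ed d) (S : Matrix (Fin d) (Fin d) ℝ) : Measure (Ed d) :=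
  (stdGaussian d).map fun x => m + (msqrt S).toEuclideanLin x

def normalApprox {d : ℕ} (μ : Measure (Ed d)) : Measure (Ed d) :=
  gaussianE (meanVec μ) (covMatrix μ)

theorem ConvexOn.add_fderiv_sub_le {E : Type*} [NormedAddCommGroup E] [NormedSpace ℝ E]
    {s : Set E} {φ : E → ℝ} {φ' : E →L[ℝ] ℝ} {x y : E} (hφ : ConvexOn ℝ s φ)
    (hx : x ∈ s) (hy : y ∈ s) (hφ' : HasFDerivAt φ φ' x) : φ x + φ' (y - x) ≤ φ y := by
  let L : ℝ →ᵃ[ℝ] E := AffineMap.lineMap x y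
  have hline : ConvexOn ℝ (L ⁻¹' s) (φ ∘ L) := hφ.comp_affineMap L
  have hderiv : HasDerivAt (φ ∘ L) (φ' (y - x)) 0 := by
    have hφ'0 : HasFDerivAt φ φ' (L 0) := by simpa [L] using hφ'
    exact hφ'0.comp_hasDerivAt 0 AffineMap.hasDerivAt_lineMap
  have hslope := hline.le_slope_of_hasDerivAt (x := (0 : ℝ)) (y := 1) (by simpa [L] using hx)
    (by simpa [L] using hy) one_pos hderiv
  simp only [slope_def_field, Function.comp_apply, L, AffineMap.lineMap_apply_zero,
    AffineMap.lineMap_apply_one, sub_zero, div_one] at hslope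
  linarith

theorem ConvexOn.add_inner_sub_le_of_hasGradientAt {E : Type*} [NormedAddCommGroup E]
    [InnerProductSpace ℝ E] [CompleteSpace E] {s : Set E} {φ : E → ℝ} {g x y : E}
    (hφ : ConvexOn ℝ s φ) (hx : x ∈ s) (hy : y ∈ s) (hg : HasGradientAt φ g x) :
    φ x + ⟪g, y - x⟫ ≤ φ y :=
  hφ.add_fderiv_sub_le hx hy hg.hasFDerivAt

section DenseSupremum

variable {X δ α : Type*} [TopologicalSpace X] [TopologicalSpace.SeparableSpace X]
  [MeasurableSpace δ] [ConditionallyCompleteLinearOrder α] [TopologicalSpace α] [OrderTopology α]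
  [SecondCountableTopology α] [MeasurableSpace α] [BorelSpace α] {f : X → δ → α}

theorem measurable_iSup_of_continuous (hc : ∀ b, Continuous fun x => f x b)
    (hm : ∀ x, Measurable (f x)) : Measurable fun b => ⨆ x, f x b := by
  obtain ⟨S, hS, hSd⟩ := TopologicalSpace.exists_countable_dense X
  have := hS.to_subtype
  simp_rw [← hSd.ciSup' (hc _)]
  exact Measurable.iSup fun s => hm s

theorem measurableSet_bddAbove_range_of_continuous (hc : ∀ b, Continuous fun x => f x b)
    (hm : ∀ x, Measurable (f x)) : MeasurableSet {b | BddAbove (range fun x => f x b)} := by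
  obtain ⟨S, hS, hSd⟩ := TopologicalSpace.exists_countable_dense X
  have := hS.to_subtype
  have hbdd : ∀ b, BddAbove (range fun x => f x b) ↔ BddAbove (range fun s : S => f s b) :=
    fun b => by rw [BddAbove, BddAbove, ← hSd.upperBounds_image (hc b), image_eq_range]
  simp_rw [hbdd]
  exact measurableSet_bddAbove_range fun s => hm s

end DenseSupremum

section FenchelConjugate

variable {E : Type*} [NormedAddCommGroup E] [InnerProductSpace ℝ E] {φ : E → ℝ}

/-- The Legendre–Fenchel conjugate. It takes the junk value `0` off the effective domain
`{y | BddAbove (range fun x => ⟪x, y⟫ - φ x)}`, where the real supremum is infinite. -/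
def fenchelConjugate (φ : E → ℝ) (y : E) : ℝ := ⨆ x, (⟪x, y⟫ - φ x)

theorem inner_le_add_fenchelConjugate {y : E} (hy : BddAbove (range fun x => ⟪x, y⟫ - φ x))
    (x : E) : ⟪x, y⟫ ≤ φ x + fenchelConjugate φ y :=
  sub_le_iff_le_add'.1 (le_ciSup hy x)

theorem ConvexOn.isGreatest_inner_sub_of_hasGradientAt [CompleteSpace E]
    (hφ : ConvexOn ℝ univ φ) {g x : E} (hg : HasGradientAt φ g x) :
    IsGreatest (range fun z => ⟪z, g⟫ - φ z) (⟪x, g⟫ - φ x) := by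
  refine ⟨⟨x, rfl⟩, ?_⟩
  rintro - ⟨z, rfl⟩
  have hsub := hφ.add_inner_sub_le_of_hasGradientAt (mem_univ x) (mem_univ z) hg
  rw [inner_sub_right, real_inner_comm z g, real_inner_comm x g] at hsub
  linarith

theorem ConvexOn.fenchelConjugate_eq_of_hasGradientAt [CompleteSpace E]
    (hφ : ConvexOn ℝ univ φ) {g x : E} (hg : HasGradientAt φ g x) :
    fenchelConjugate φ g = ⟪x, g⟫ - φ x :=
  (hφ.isGreatest_inner_sub_of_hasGradientAt hg).csSup_eq

variable [MeasurableSpace E] [BorelSpace E] [TopologicalSpace.SeparableSpace E]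

theorem Continuous.measurable_fenchelConjugate (hφ : Continuous φ) :
    Measurable (fenchelConjugate φ) :=
  measurable_iSup_of_continuous (fun _ => (continuous_id.inner continuous_const).sub hφ)
    fun _ => (measurable_const.inner measurable_id).sub_const _

theorem Continuous.measurableSet_bddAbove_inner_sub (hφ : Continuous φ) :
    MeasurableSet {y : E | BddAbove (range fun x => ⟪x, y⟫ - φ x)} :=
  measurableSet_bddAbove_range_of_continuous
    (fun _ => (continuous_id.inner continuous_const).sub hφ)
    fun _ => (measurable_const.inner measurable_id).sub_const _

end FenchelConjugate

theorem MeasureTheory.MeasurePreserving.integral_comp_of_aestronglyMeasurable {α β G : Type*}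
    [MeasurableSpace α] [MeasurableSpace β] [NormedAddCommGroup G] [NormedSpace ℝ G]
    {μ : Measure α} {ν : Measure β} {f : α → β} (hf : MeasurePreserving f μ ν) {g : β → G}
    (hg : AEStronglyMeasurable g ν) :
    ∫ x, g (f x) ∂μ = ∫ y, g y ∂ν := by
  rw [← hf.map_eq, integral_map hf.aemeasurable (hf.map_eq ▸ hg)]

section SquareIntegrable

variable {α E : Type*} [MeasurableSpace α] {μ : Measure α} [NormedAddCommGroup E]
  [InnerProductSpace ℝ E]

theorem MeasureTheory.MemLp.integrable_inner {f g : α → E} (hf : MemLp f 2 μ)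
    (hg : MemLp g 2 μ) : Integrable (fun x => ⟪f x, g x⟫) μ :=
  (L2.integrable_inner (hf.toLp f) (hg.toLp g)).congr <| by
    filter_upwards [hf.coeFn_toLp, hg.coeFn_toLp] with x hfx hgx
    rw [hfx, hgx]

theorem MeasureTheory.MemLp.integrable_norm_sq {F : Type*} [NormedAddCommGroup F] {f : α → F}
    (hf : MemLp f 2 μ) : Integrable (fun x => ‖f x‖ ^ 2) μ :=
  (memLp_two_iff_integrable_sq_norm hf.1).1 hf

theorem lintegral_ofReal_norm_sub_sq {f g : α → E} (hf : MemLp f 2 μ) (hg : MemLp g 2 μ) :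
    ∫⁻ x, ENNReal.ofReal (‖f x - g x‖ ^ 2) ∂μ =
      ENNReal.ofReal (∫ x, ‖f x‖ ^ 2 ∂μ - 2 * ∫ x, ⟪f x, g x⟫ ∂μ + ∫ x, ‖g x‖ ^ 2 ∂μ) := by
  have hsub : Integrable (fun x => ‖f x - g x‖ ^ 2) μ := (hf.sub hg).integrable_norm_sq
  have hfg := (hf.integrable_inner hg).const_mul 2
  have hfg' : Integrable (fun x => ‖f x‖ ^ 2 - 2 * ⟪f x, g x⟫) μ := hf.integrable_norm_sq.sub hfg
  rw [← ofReal_integral_eq_lintegral_ofReal hsub (ae_of_all _ fun _ => by positivity)]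
  simp_rw [norm_sub_sq_real]
  rw [integral_add hfg' hg.integrable_norm_sq,
    integral_sub hf.integrable_norm_sq hfg, integral_const_mul]

end SquareIntegrable

theorem FiniteSecondMoment.memLp_id {d : ℕ} {μ : Measure (Ed d)} (hμ : FiniteSecondMoment μ) :
    MemLp id 2 μ :=
  (memLp_two_iff_integrable_sq_norm aestronglyMeasurable_id).2
    ⟨(continuous_norm.pow 2).aestronglyMeasurable,
      (hasFiniteIntegral_iff_ofReal (ae_of_all _ fun _ => by positivity)).2 hμ⟩

section GradientTransport

variable {E : Type*} [NormedAddCommGroup E] [InnerProductSpace ℝ E] [CompleteSpace E]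
  [MeasurableSpace E] {μ : Measure E} [IsFiniteMeasure μ] {φ : E → ℝ} {T : E → E}

theorem ConvexOn.integrable_of_hasGradientAt (hφ : ConvexOn ℝ univ φ)
    (hφm : AEStronglyMeasurable φ μ) (hgrad : ∀ᵐ x ∂μ, HasGradientAt φ (T x) x)
    (hX : MemLp id 2 μ) (hT : MemLp T 2 μ) : Integrable φ μ := by
  rcases eq_zero_or_neZero μ with rfl | _
  · exact integrable_zero_measure
  obtain ⟨x₀, hx₀⟩ := hgrad.exists
  refine integrable_of_le_of_le (g₁ := fun x => φ x₀ + ⟪T x₀, x - x₀⟫)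
    (g₂ := fun x => φ x₀ - ⟪T x, x₀ - x⟫) hφm ?_ ?_ ?_ ?_
  · exact ae_of_all _ fun x => hφ.add_inner_sub_le_of_hasGradientAt (mem_univ x₀) (mem_univ x) hx₀
  · filter_upwards [hgrad] with x hx
    have hsub := hφ.add_inner_sub_le_of_hasGradientAt (mem_univ x) (mem_univ x₀) hx
    linarith
  · exact (integrable_const _).add ((memLp_const _).integrable_inner (hX.sub (memLp_const x₀)))
  · exact (integrable_const _).sub (hT.integrable_inner ((memLp_const x₀).sub hX))

variable [BorelSpace E] [SecondCountableTopology E]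

theorem integral_inner_le_of_hasGradientAt (hφ : ConvexOn ℝ univ φ) (hφc : Continuous φ)
    (hgrad : ∀ᵐ x ∂μ, HasGradientAt φ (T x) x) (hX : MemLp id 2 μ) (hT : MemLp T 2 μ)
    {γ : Measure (E × E)} (h₁ : MeasurePreserving Prod.fst γ μ)
    (h₂ : MeasurePreserving Prod.snd γ (μ.map T)) :
    ∫ p, ⟪p.1, p.2⟫ ∂γ ≤ ∫ x, ⟪x, T x⟫ ∂μ := by
  have hTm : AEMeasurable T μ := hT.aestronglyMeasurable.aemeasurable
  have hY : MemLp id 2 (μ.map T) := (memLp_map_measure_iff aestronglyMeasurable_id hTm).2 hT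
  have hψm : Measurable (fenchelConjugate φ) := hφc.measurable_fenchelConjugate
  have hψT : ∀ᵐ x ∂μ, fenchelConjugate φ (T x) = ⟪x, T x⟫ - φ x :=
    hgrad.mono fun x hx => hφ.fenchelConjugate_eq_of_hasGradientAt hx
  have hφi : Integrable φ μ := hφ.integrable_of_hasGradientAt hφc.aestronglyMeasurable hgrad hX hT
  have hψTi : Integrable (fun x => fenchelConjugate φ (T x)) μ :=
    ((hX.integrable_inner hT).sub hφi).congr (hψT.mono fun x hx => hx.symm)
  have hφγ : Integrable (fun p : E × E => φ p.1) γ := h₁.integrable_comp_of_integrable hφi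
  have hψγ : Integrable (fun p : E × E => fenchelConjugate φ p.2) γ :=
    h₂.integrable_comp_of_integrable <|
      (integrable_map_measure hψm.aestronglyMeasurable hTm).2 hψTi
  have hdom : ∀ᵐ p ∂γ, BddAbove (range fun x => ⟪x, p.2⟫ - φ x) := by
    refine h₂.quasiMeasurePreserving.ae (p := fun y => BddAbove (range fun x => ⟪x, y⟫ - φ x)) ?_
    rw [ae_map_iff hTm hφc.measurableSet_bddAbove_inner_sub]
    exact hgrad.mono fun x hx => (hφ.isGreatest_inner_sub_of_hasGradientAt hx).bddAbove
  calc ∫ p, ⟪p.1, p.2⟫ ∂γ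
      ≤ ∫ p, (φ p.1 + fenchelConjugate φ p.2) ∂γ :=
        integral_mono_ae ((hX.comp_measurePreserving h₁).integrable_inner
          (hY.comp_measurePreserving h₂)) (hφγ.add hψγ)
          (hdom.mono fun p hp => inner_le_add_fenchelConjugate hp p.1)
    _ = ∫ x, φ x ∂μ + ∫ x, fenchelConjugate φ (T x) ∂μ := by
        rw [integral_add hφγ hψγ,
          h₁.integral_comp_of_aestronglyMeasurable hφc.aestronglyMeasurable,
          h₂.integral_comp_of_aestronglyMeasurable hψm.aestronglyMeasurable,
          integral_map hTm hψm.aestronglyMeasurable]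
    _ = ∫ x, ⟪x, T x⟫ ∂μ := by
        rw [← integral_add hφi hψTi]
        exact integral_congr_ae (hψT.mono fun x hx => by simp only [hx]; ring)

end GradientTransport

/-- **Knott–Smith optimality criterion.**
If `T = ∇φ` `μ`-a.e. for a convex `φ`, and `T₋#μ` has finite second moment, then `T` is an
optimal transport map from `μ` to `T₋#μ` for the quadratic cost: the transport cost of `T`
is at most the cost of any coupling of `μ` and `μ.map T`. -/
theorem knott_smith_optimality {d : ℕ} (μ : Measure (Ed d)) [IsProbabilityMeasure μ]
    (hμ : FiniteSecondMoment μ)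
    (φ : Ed d → ℝ) (hφ : ConvexOn ℝ Set.univ φ)
    (T : Ed d → Ed d) (hTmeas : AEMeasurable T μ)
    (hgrad : ∀ᵐ x ∂μ, HasGradientAt φ (T x) x)
    (hν : FiniteSecondMoment (μ.map T)) :
    ∀ γ : Measure (Ed d × Ed d), IsCoupling γ μ (μ.map T) →
      ∫⁻ x, ENNReal.ofReal (‖x - T x‖ ^ 2) ∂μ ≤ cost2 γ := by
  rintro γ ⟨hγ₁, hγ₂⟩
  have h₁ : MeasurePreserving Prod.fst γ μ := ⟨measurable_fst, hγ₁⟩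
  have h₂ : MeasurePreserving Prod.snd γ (μ.map T) := ⟨measurable_snd, hγ₂⟩
  have hX : MemLp id 2 μ := hμ.memLp_id
  have hT : MemLp T 2 μ := hν.memLp_id.comp_of_map hTmeas
  have hφc : Continuous φ := continuousOn_univ.1 (hφ.continuousOn isOpen_univ)
  have hinner := integral_inner_le_of_hasGradientAt hφ hφc hgrad hX hT h₁ h₂
  have hsq : Continuous fun x : Ed d => ‖x‖ ^ 2 := by fun_prop
  have hfst : ∫ p, ‖p.1‖ ^ 2 ∂γ = ∫ x, ‖x‖ ^ 2 ∂μ :=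
    h₁.integral_comp_of_aestronglyMeasurable hsq.aestronglyMeasurable
  have hsnd : ∫ p, ‖p.2‖ ^ 2 ∂γ = ∫ x, ‖T x‖ ^ 2 ∂μ := by
    rw [h₂.integral_comp_of_aestronglyMeasurable hsq.aestronglyMeasurable,
      integral_map hTmeas hsq.aestronglyMeasurable]
  calc ∫⁻ x, ENNReal.ofReal (‖x - T x‖ ^ 2) ∂μ
      = ENNReal.ofReal (∫ x, ‖x‖ ^ 2 ∂μ - 2 * ∫ x, ⟪x, T x⟫ ∂μ + ∫ x, ‖T x‖ ^ 2 ∂μ) :=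
        lintegral_ofReal_norm_sub_sq hX hT
    _ ≤ ENNReal.ofReal (∫ p, ‖p.1‖ ^ 2 ∂γ - 2 * ∫ p, ⟪p.1, p.2⟫ ∂γ + ∫ p, ‖p.2‖ ^ 2 ∂γ) :=
        ENNReal.ofReal_le_ofReal (by rw [hfst, hsnd]; linarith)
    _ = cost2 γ :=
        (lintegral_ofReal_norm_sub_sq (hX.comp_measurePreserving h₁)
          (hν.memLp_id.comp_measurePreserving h₂)).symm

end
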